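/- Let F be a finite field and let x and y be two distinct lists over F, each of length at most L, all of whose elements are nonzero. Then the number of seeds r ∈ F for which H_r(x) = H_r(y) is at most L. -/

import Mathlib

/-- The polynomial hash of a list `x = [x₀, …, x_{k-1}]` with seed `r`:
`H_r(x) = Σ_{i=0}^{k-1} x_i · r^(i+1)`. -/
def polyHash {R : Type*} [CommRing R] (r : R) (x : List R) : R :=
  ∑ i : Fin x.length, x.get i * r ^ ((i : ℕ) + 1)

/-!
Horner's rule writes `H_r(a :: l) = r (a + H_r(l))`, so `H_r(x)` is the value at `r` of a polynomial
`hashPoly x` of degree at most `length x`. Peeling off `X` and reading the constant term recovers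
`x` from `hashPoly x` as long as no entry is zero (a trailing zero would otherwise be invisible).
Hence for `x ≠ y` the polynomial `hashPoly x - hashPoly y` is nonzero of degree at most `L`, and
the colliding seeds are among its at most `L` roots.
-/

open Polynomial

section CommRing

variable {R : Type*} [CommRing R]

theorem polyHash_nil (r : R) : polyHash r [] = 0 := rfl

theorem polyHash_cons (r a : R) (l : List R) :
    polyHash r (a :: l) = r * (a + polyHash r l) := by
  simp only [polyHash, List.length_cons, Fin.sum_univ_succ, List.get_eq_getElem,
    Fin.val_zero, Fin.val_succ, List.getElem_cons_zero, List.getElem_cons_succ, mul_add,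
    Finset.mul_sum]
  congr 1
  · ring
  · exact Finset.sum_congr rfl fun i _ => by ring

noncomputable def hashPoly : List R → R[X]
  | [] => 0
  | a :: l => X * (C a + hashPoly l)

@[simp]
theorem hashPoly_nil : hashPoly ([] : List R) = 0 := rfl

@[simp]
theorem eval_hashPoly (r : R) (x : List R) : (hashPoly x).eval r = polyHash r x := by
  induction x with
  | nil => simp [hashPoly, polyHash_nil]
  | cons a l ih => simp [hashPoly, polyHash_cons, ih]

theorem natDegree_hashPoly_le (x : List R) : (hashPoly x).natDegree ≤ x.length := by
  induction x with
  | nil => simp [hashPoly]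
  | cons a l ih =>
    calc (X * (C a + hashPoly l)).natDegree
        ≤ (X : R[X]).natDegree + (C a + hashPoly l).natDegree := natDegree_mul_le
      _ ≤ 1 + l.length := by
        gcongr
        · exact natDegree_X_le
        · exact (natDegree_add_le _ _).trans (max_le (by simp) ih)
      _ = (a :: l).length := by simp [add_comm]

theorem coeff_hashPoly_zero (x : List R) : (hashPoly x).coeff 0 = 0 := by
  cases x <;> simp [hashPoly]

theorem coeff_hashPoly_cons_one (a : R) (l : List R) : (hashPoly (a :: l)).coeff 1 = a := by
  simp [hashPoly, coeff_X_mul, coeff_hashPoly_zero]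

theorem hashPoly_cons_ne_zero {a : R} (ha : a ≠ 0) (l : List R) : hashPoly (a :: l) ≠ 0 :=
  fun h => ha (by simpa only [h, coeff_zero, eq_comm] using coeff_hashPoly_cons_one a l)

theorem hashPoly_cons_injective {a b : R} {l m : List R}
    (h : hashPoly (a :: l) = hashPoly (b :: m)) : a = b ∧ hashPoly l = hashPoly m := by
  have hab : a = b := by
    simpa only [coeff_hashPoly_cons_one] using congrArg (coeff · 1) h
  subst hab
  exact ⟨rfl, add_left_cancel (isRegular_X.left h)⟩

theorem hashPoly_injOn_nonzero :
    {x : List R | ∀ a ∈ x, a ≠ 0}.InjOn hashPoly := by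
  intro x hx y hy hxy
  induction x generalizing y with
  | nil =>
    cases y with
    | nil => rfl
    | cons b m => exact absurd hxy.symm (hashPoly_cons_ne_zero (hy b List.mem_cons_self) m)
  | cons a l ih =>
    cases y with
    | nil => exact absurd hxy (hashPoly_cons_ne_zero (hx a List.mem_cons_self) l)
    | cons b m =>
      obtain ⟨rfl, hlm⟩ := hashPoly_cons_injective hxy
      rw [ih (List.forall_mem_cons.1 hx).2 (List.forall_mem_cons.1 hy).2 hlm]

end CommRing

theorem card_filter_eval_eq_le {R : Type*} [CommRing R] [IsDomain R] [Fintype R] [DecidableEq R]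
    {p q : R[X]} (hpq : p ≠ q) :
    (Finset.univ.filter fun r => p.eval r = q.eval r).card ≤ max p.natDegree q.natDegree := by
  refine (card_le_degree_of_subset_roots ?_).trans (natDegree_sub_le p q)
  intro r hr
  rw [mem_roots (sub_ne_zero.mpr hpq), IsRoot, eval_sub, sub_eq_zero]
  simpa using hr

/-- For two distinct lists of nonzero elements of a finite field, each of length at most `L`,
the number of seeds `r` for which their polynomial hashes collide is at most `L`. -/
theorem card_collision_seeds_le {F : Type*} [Field F] [Fintype F] [DecidableEq F]
    (L : ℕ) (x y : List F) (hxy : x ≠ y)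
    (hx : x.length ≤ L) (hy : y.length ≤ L)
    (hx0 : ∀ a ∈ x, a ≠ 0) (hy0 : ∀ a ∈ y, a ≠ 0) :
    (Finset.univ.filter fun r : F => polyHash r x = polyHash r y).card ≤ L := by
  have hP : hashPoly x ≠ hashPoly y := fun h => hxy (hashPoly_injOn_nonzero hx0 hy0 h)
  simp only [← eval_hashPoly]
  exact (card_filter_eval_eq_le hP).trans
    (max_le ((natDegree_hashPoly_le x).trans hx) ((natDegree_hashPoly_le y).trans hy))
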